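/- Let f be a transcendental entire function such that T(r,f)/log M(r,f) → 1 as r → ∞ along a set E of positive upper logarithmic density. For a given constant c with 0 < c < 1/4 and for r ∈ E, set I_r = {θ ∈ [0,2π) : log|f(re^{iθ})| ≤ (1−c) log M(r,f)}. Then the Lebesgue measure of I_r tends to 0 as r → ∞ along E. -/

import Mathlib

/-!
On the circle of radius `r`, `log⁺ |f|` is at most `L = log M(r,f)` everywhere and at most
`(1 - c) L` on `I_r`, so averaging gives `T(r,f) ≤ L (1 - c |I_r| / 2π)`, i.e.
`|I_r| ≤ (2π / c) (1 - T(r,f) / L)`. The right-hand side tends to `0` along `E` because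
`T(r,f) / L → 1` there.
-/

open Filter MeasureTheory

/-- The maximum modulus `M(r,f) = max_{|z|=r} |f z|`. -/
noncomputable def maxMod (f : ℂ → ℂ) (r : ℝ) : ℝ :=
  sSup ((fun z => ‖f z‖) '' Metric.sphere (0 : ℂ) r)

/-- `f` agrees with a polynomial function. -/
def IsPolyFun (f : ℂ → ℂ) : Prop :=
  ∃ p : Polynomial ℂ, ∀ z, f z = p.eval z

/-- The positive part of the logarithm, `log⁺ x = max 0 (log x)`. -/
noncomputable def posLog (x : ℝ) : ℝ := max 0 (Real.log x)

/-- The Nevanlinna characteristic of an entire function: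
`T(r,f) = (1/2π) ∫₀^{2π} log⁺ |f(r e^{iθ})| dθ`. -/
noncomputable def nevT (f : ℂ → ℂ) (r : ℝ) : ℝ :=
  (2 * Real.pi)⁻¹ *
    ∫ θ in (0 : ℝ)..(2 * Real.pi), posLog ‖f (r * Complex.exp (θ * Complex.I))‖

/-- The upper logarithmic density of a set `E ⊆ [1,∞)`:
`limsup_{r→∞} (∫_{E ∩ [1,r]} dt/t) / log r`. -/
noncomputable def upperLogDens (E : Set ℝ) : ℝ :=
  limsup (fun r : ℝ => (∫ t in E ∩ Set.Icc 1 r, 1 / t) / Real.log r) atTop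


open scoped Real

open Real (two_pi_pos)

/-- The set `I_r` of the statement. -/
noncomputable def lowModulusSet (f : ℂ → ℂ) (c r : ℝ) : Set ℝ :=
  {θ | θ ∈ Set.Ico 0 (2 * π) ∧
    Real.log ‖f (r * Complex.exp (θ * Complex.I))‖ ≤ (1 - c) * Real.log (maxMod f r)}

theorem posLog_eq_real_posLog : posLog = Real.posLog := rfl

theorem setIntegral_le_sub_mul_measureReal {α : Type*} [MeasurableSpace α] {μ : Measure α}
    {s t : Set α} {g : α → ℝ} {L δ : ℝ} (hsm : MeasurableSet s) (ht : MeasurableSet t)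
    (hs : μ s ≠ ⊤) (hts : t ⊆ s) (hg : IntegrableOn g s μ) (hg_s : ∀ x ∈ s, g x ≤ L)
    (hg_t : ∀ x ∈ t, g x ≤ L - δ) :
    ∫ x in s, g x ∂μ ≤ L * μ.real s - δ * μ.real t := by
  have hst : μ (s \ t) ≠ ⊤ := measure_ne_top_of_subset Set.sdiff_subset hs
  have ht' : μ t ≠ ⊤ := measure_ne_top_of_subset hts hs
  calc ∫ x in s, g x ∂μ = ∫ x in t, g x ∂μ + ∫ x in s \ t, g x ∂μ := by
        rw [← setIntegral_union Set.disjoint_sdiff_right (hsm.diff ht) (hg.mono_set hts)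
          (hg.mono_set Set.sdiff_subset), Set.union_sdiff_cancel hts]
    _ ≤ ∫ _ in t, (L - δ) ∂μ + ∫ _ in s \ t, L ∂μ :=
        add_le_add (setIntegral_mono_on (hg.mono_set hts) (integrableOn_const ht') ht hg_t)
          (setIntegral_mono_on (hg.mono_set Set.sdiff_subset) (integrableOn_const hst)
            (hsm.diff ht) fun x hx => hg_s x hx.1)
    _ = L * μ.real s - δ * μ.real t := by
        rw [setIntegral_const, setIntegral_const, measureReal_sdiff hts ht, smul_eq_mul,
          smul_eq_mul]
        ring

theorem norm_le_maxMod {f : ℂ → ℂ} (hf : Continuous f) (z : ℂ) :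
    ‖f z‖ ≤ maxMod f ‖z‖ :=
  le_csSup ((isCompact_sphere 0 ‖z‖).bddAbove_image (continuous_norm.comp hf).continuousOn)
    ⟨z, by simp, rfl⟩

theorem nevT_nonneg (f : ℂ → ℂ) (r : ℝ) : 0 ≤ nevT f r :=
  mul_nonneg (by positivity)
    (intervalIntegral.integral_nonneg two_pi_pos.le fun _ _ => Real.posLog_nonneg)

theorem nevT_eq_setIntegral (f : ℂ → ℂ) (r : ℝ) :
    2 * π * nevT f r =
      ∫ θ in Set.Ico 0 (2 * π), Real.posLog ‖f (r * Complex.exp (θ * Complex.I))‖ := by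
  rw [nevT, mul_inv_cancel_left₀ two_pi_pos.ne',
    intervalIntegral.integral_of_le two_pi_pos.le, integral_Ioc_eq_integral_Ioo,
    integral_Ico_eq_integral_Ioo, posLog_eq_real_posLog]

theorem volume_lowModulusSet_le {f : ℂ → ℂ} (hf : Continuous f) {c r : ℝ} (hr : 0 ≤ r)
    (hc : 0 < c) (hc1 : c ≤ 1) (hL : 0 < Real.log (maxMod f r)) :
    volume (lowModulusSet f c r) ≤
      ENNReal.ofReal (2 * π / c * (1 - nevT f r / Real.log (maxMod f r))) := by
  set L := Real.log (maxMod f r)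
  have hnorm : ∀ θ : ℝ, ‖(r : ℂ) * Complex.exp (θ * Complex.I)‖ = r := fun θ => by
    simp [Complex.norm_exp_ofReal_mul_I, abs_of_nonneg hr]
  have hmeas : MeasurableSet (lowModulusSet f c r) :=
    measurableSet_Ico.inter <| measurableSet_le
      (Real.measurable_log.comp (by fun_prop)) measurable_const
  have hfin : volume (lowModulusSet f c r) ≠ ⊤ :=
    measure_ne_top_of_subset (fun _ hθ => hθ.1) measure_Ico_lt_top.ne
  have hcont : Continuous fun θ : ℝ => Real.posLog ‖f (r * Complex.exp (θ * Complex.I))‖ :=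
    by fun_prop
  have hle (θ : ℝ) : Real.posLog ‖f (r * Complex.exp (θ * Complex.I))‖ ≤ L := by
    have hmax := norm_le_maxMod hf (r * Complex.exp (θ * Complex.I))
    rw [hnorm] at hmax
    exact (Real.posLog_le_posLog (norm_nonneg _) hmax).trans_eq (max_eq_right hL.le)
  have hint := setIntegral_le_sub_mul_measureReal (μ := volume) (δ := c * L) measurableSet_Ico
    hmeas measure_Ico_lt_top.ne (fun _ hθ => hθ.1)
    (hcont.integrableOn_Icc.mono_set Set.Ico_subset_Icc_self) (fun θ _ => hle θ)
    (fun θ hθ => max_le (by nlinarith) (by linarith [hθ.2]))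
  rw [← nevT_eq_setIntegral, Real.volume_real_Ico_of_le two_pi_pos.le, sub_zero] at hint
  rw [← ofReal_measureReal hfin]
  refine ENNReal.ofReal_le_ofReal ?_
  rw [div_mul_eq_mul_div, le_div_iff₀ hc, one_sub_div hL.ne', mul_div_assoc', le_div_iff₀ hL]
  linarith

theorem stmt16_general (f : ℂ → ℂ) (hf : Differentiable ℂ f)
    (E : Set ℝ)
    (hsim : Tendsto (fun r => nevT f r / Real.log (maxMod f r)) (atTop ⊓ 𝓟 E) (nhds 1))
    (c : ℝ) (hc : 0 < c) (hc' : c < 1 / 4) :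
    Tendsto (fun r : ℝ =>
        volume {θ : ℝ | θ ∈ Set.Ico 0 (2 * Real.pi) ∧
          Real.log ‖f (r * Complex.exp (θ * Complex.I))‖ ≤
            (1 - c) * Real.log (maxMod f r)})
      (atTop ⊓ 𝓟 E) (nhds 0) := by
  have hL : ∀ᶠ r in atTop ⊓ 𝓟 E, 0 < Real.log (maxMod f r) := by
    filter_upwards [hsim.eventually (lt_mem_nhds one_pos)] with r hr
    exact (div_pos_iff.mp hr).elim (·.2) fun h => absurd h.1 (nevT_nonneg f r).not_gt
  have hr : ∀ᶠ r in atTop ⊓ 𝓟 E, (0 : ℝ) ≤ r :=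
    (eventually_ge_atTop 0).filter_mono inf_le_left
  have hbound : Tendsto
      (fun r => ENNReal.ofReal (2 * π / c * (1 - nevT f r / Real.log (maxMod f r))))
      (atTop ⊓ 𝓟 E) (nhds 0) := by
    simpa using ENNReal.tendsto_ofReal
      (((tendsto_const_nhds (x := (1 : ℝ))).sub hsim).const_mul (2 * π / c))
  refine tendsto_of_tendsto_of_tendsto_of_le_of_le' tendsto_const_nhds hbound
    (.of_forall fun _ => zero_le) ?_
  filter_upwards [hr, hL] with r hr hL
  exact volume_lowModulusSet_le hf.continuous hr hc (by linarith) hL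

/-- If `f` is a transcendental entire function with `T(r,f) ∼ log M(r,f)` as `r → ∞` along a
set `E` of positive upper logarithmic density, and `0 < c < 1/4`, then the Lebesgue measure of
`I_r = {θ ∈ [0,2π) : log |f(r e^{iθ})| ≤ (1 − c) log M(r,f)}` tends to `0` as `r → ∞`
along `E`. -/
theorem stmt16 (f : ℂ → ℂ) (hf : Differentiable ℂ f) (hft : ¬ IsPolyFun f)
    (E : Set ℝ) (hE : E ⊆ Set.Ici 1) (hEdens : 0 < upperLogDens E)
    (hsim : Tendsto (fun r => nevT f r / Real.log (maxMod f r)) (atTop ⊓ 𝓟 E) (nhds 1))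
    (c : ℝ) (hc : 0 < c) (hc' : c < 1 / 4) :
    Tendsto (fun r : ℝ =>
        volume {θ : ℝ | θ ∈ Set.Ico 0 (2 * Real.pi) ∧
          Real.log ‖f (r * Complex.exp (θ * Complex.I))‖ ≤
            (1 - c) * Real.log (maxMod f r)})
      (atTop ⊓ 𝓟 E) (nhds 0) :=
  stmt16_general f hf E hsim c hc hc'
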